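/- arXiv:2312.00753 — 6 statements merged into one kernel-verified Lean document; each statement's English description precedes it below -/
import Mathlib

section
/- There is no matrix g in SL(2,ℤ) such that |tr(g·M_i)| ≤ 2 for all four matrices M_1 = [[1,0],[0,1]], M_2 = [[-3,2],[-2,1]], M_3 = [[1,2],[-2,-3]], M_4 = [[1,-2],[4,-7]]. -/
/-!
Write `g = !![a, b; c, d]` and pass to the coordinates `s = a + d`, `δ = d - a`, `u = c - b`,
`v = b + c`, in which `4 det g = s² - δ² + u² - v²` and the four traces are `s`, `2(u + δ) - s`,
`2(u - δ) - s` and `v - 3(s + u) - 4δ`. The first three bounds force `|s| ≤ 2`, `|δ| ≤ 1` and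
`|2u - s| ≤ 2`; then `s² + u² = 4 + δ² + v²` is only possible when `s = ±2`, `δ = 0` and `v = ±u`
with `u` of the sign of `s`, and then the fourth trace has absolute value at least `6`.
-/

theorem Matrix.four_mul_det_fin_two_of {R : Type*} [CommRing R] (a b c d : R) :
    4 * !![a, b; c, d].det = (a + d) ^ 2 - (d - a) ^ 2 + (c - b) ^ 2 - (b + c) ^ 2 := by
  rw [Matrix.det_fin_two_of]
  ring

theorem sq_add_sq_ne_four_add_sq_add_sq_of_abs_le {s δ u v : ℤ} (hpar : Even (s + δ))
    (hs : |s| ≤ 2) (hδ : |δ| ≤ 1) (hu : |2 * u - s| ≤ 2) (hv : |3 * (s + u) + 4 * δ - v| ≤ 2) :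
    s ^ 2 + u ^ 2 ≠ 4 + δ ^ 2 + v ^ 2 := by
  rw [abs_le] at hs hδ hu hv
  intro h
  have hs₂ : s = 2 ∨ s = -2 := by
    by_contra! hne
    have : s ^ 2 ≤ 1 := by nlinarith [show -1 ≤ s ∧ s ≤ 1 by omega]
    have : u ^ 2 ≤ 1 := by nlinarith [show -1 ≤ u ∧ u ≤ 1 by omega]
    nlinarith [sq_nonneg δ, sq_nonneg v]
  obtain ⟨k, hk⟩ := hpar
  obtain rfl : δ = 0 := by omega
  have huv : v ^ 2 = u ^ 2 := by rcases hs₂ with rfl | rfl <;> linarith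
  obtain rfl | rfl := sq_eq_sq_iff_eq_or_eq_neg.mp huv <;> omega

/-- There is no matrix `g` in `SL(2, ℤ)` (i.e., a 2×2 integer matrix of determinant 1)
such that `|tr (g * Mᵢ)| ≤ 2` for all four matrices
`M₁ = [[1,0],[0,1]]`, `M₂ = [[-3,2],[-2,1]]`, `M₃ = [[1,2],[-2,-3]]`, `M₄ = [[1,-2],[4,-7]]`. -/
theorem no_small_trace_translate :
    ¬ ∃ g : Matrix (Fin 2) (Fin 2) ℤ, g.det = 1 ∧
      |(g * !![1, 0; 0, 1]).trace| ≤ 2 ∧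
      |(g * !![-3, 2; -2, 1]).trace| ≤ 2 ∧
      |(g * !![1, 2; -2, -3]).trace| ≤ 2 ∧
      |(g * !![1, -2; 4, -7]).trace| ≤ 2 := by
  rintro ⟨g, hdet, h₁, h₂, h₃, h₄⟩
  obtain ⟨a, b, c, d, rfl⟩ : ∃ a b c d : ℤ, g = !![a, b; c, d] :=
    ⟨g 0 0, g 0 1, g 1 0, g 1 1, g.eta_fin_two⟩
  have hquad := Matrix.four_mul_det_fin_two_of a b c d
  rw [hdet] at hquad
  simp only [Matrix.mul_fin_two, Matrix.trace_fin_two_of, abs_le] at h₁ h₂ h₃ h₄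
  refine sq_add_sq_ne_four_add_sq_add_sq_of_abs_le (s := a + d) (δ := d - a) (u := c - b)
    (v := b + c) ⟨d, by ring⟩ (abs_le.2 (by omega)) (abs_le.2 (by omega)) (abs_le.2 (by omega))
    (abs_le.2 (by omega)) (by linarith)
end

section
/- For every real α ∈ (0,1] and every integer i ≥ 0, the inequality binom(−α, i)·(−1)^i ≤ 2·binom(−α, 2i)·(−1)^{2i} holds; equivalently, α(α+1)⋯(α+i−1)/i! ≤ 2·α(α+1)⋯(α+2i−1)/(2i)! for i ≥ 1, and the case i = 0 holds since 1 ≤ 2. -/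
/-!
Writing `a n = α(α+1)⋯(α+n-1)/n!`, the recursion `(n+1)·a(n+1) = (α+n)·a n ≥ n·a n` shows that
`n ↦ n·a n` is nondecreasing for `α ≥ 0`. Comparing `n = i` with `n = 2i` gives `i·a i ≤ 2i·a(2i)`.
-/

/-- The generalized binomial coefficient `binom(α, i) = α(α-1)⋯(α-i+1)/i!` over `ℝ`. -/
noncomputable def rbinom (α : ℝ) (i : ℕ) : ℝ :=
  (∏ j ∈ Finset.range i, (α - j)) / i.factorial

lemma rbinom_zero (α : ℝ) : rbinom α 0 = 1 := by
  simp [rbinom]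

lemma rbinom_succ (α : ℝ) (n : ℕ) :
    rbinom α (n + 1) = rbinom α n * ((α - n) / (n + 1)) := by
  simp only [rbinom, Finset.prod_range_succ, Nat.factorial_succ, Nat.cast_mul, Nat.cast_succ]
  rw [div_mul_div_comm, mul_comm ((n : ℝ) + 1)]

/-- `risingChoose α n = α(α+1)⋯(α+n-1)/n!`. -/
noncomputable def risingChoose (α : ℝ) (n : ℕ) : ℝ :=
  rbinom (-α) n * (-1) ^ n

lemma risingChoose_zero (α : ℝ) : risingChoose α 0 = 1 := by
  simp [risingChoose, rbinom_zero]

lemma risingChoose_succ (α : ℝ) (n : ℕ) :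
    risingChoose α (n + 1) = risingChoose α n * ((α + n) / (n + 1)) := by
  simp only [risingChoose, rbinom_succ, pow_succ]
  ring

lemma risingChoose_nonneg {α : ℝ} (hα : 0 ≤ α) (n : ℕ) : 0 ≤ risingChoose α n := by
  induction n with
  | zero => simp [risingChoose_zero]
  | succ n ih => rw [risingChoose_succ]; positivity

lemma risingChoose_monotone_natCast_mul {α : ℝ} (hα : 0 ≤ α) :
    Monotone fun n : ℕ ↦ (n : ℝ) * risingChoose α n := by
  refine monotone_nat_of_le_succ fun n ↦ ?_
  have hstep : ((n + 1 : ℕ) : ℝ) * risingChoose α (n + 1) = (α + n) * risingChoose α n := by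
    rw [risingChoose_succ]
    field_simp
    push_cast
    ring
  rw [hstep]
  exact mul_le_mul_of_nonneg_right (le_add_of_nonneg_left hα) (risingChoose_nonneg hα n)

theorem binom_neg_le_two_mul_binom_neg_general (α : ℝ) (hα0 : 0 < α) (i : ℕ) :
    rbinom (-α) i * (-1) ^ i ≤ 2 * (rbinom (-α) (2 * i) * (-1) ^ (2 * i)) := by
  change risingChoose α i ≤ 2 * risingChoose α (2 * i)
  rcases Nat.eq_zero_or_pos i with rfl | hi
  · norm_num [risingChoose_zero]
  have hmono : (i : ℝ) * risingChoose α i ≤ ((2 * i : ℕ) : ℝ) * risingChoose α (2 * i) :=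
    risingChoose_monotone_natCast_mul hα0.le (by omega)
  have hi' : (0 : ℝ) < i := by exact_mod_cast hi
  rw [Nat.cast_mul, Nat.cast_two, mul_assoc, mul_left_comm] at hmono
  exact le_of_mul_le_mul_left hmono hi'

/-- For every real `α ∈ (0, 1]` and integer `i ≥ 0`,
`binom(-α, i)·(-1)^i ≤ 2·binom(-α, 2i)·(-1)^{2i}`; equivalently,
`α(α+1)⋯(α+i-1)/i! ≤ 2·α(α+1)⋯(α+2i-1)/(2i)!`. -/
theorem binom_neg_le_two_mul_binom_neg (α : ℝ) (hα0 : 0 < α) (hα1 : α ≤ 1) (i : ℕ) :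
    rbinom (-α) i * (-1) ^ i ≤ 2 * (rbinom (-α) (2 * i) * (-1) ^ (2 * i)) :=
  binom_neg_le_two_mul_binom_neg_general α hα0 i
end

section
/- As formal power series with real coefficients: each coefficient of (1−x^{2k})^{−1/(2k)} is nonnegative and bounded above by the corresponding coefficient of 2(1−x^k)^{−1/(2k)}, for every positive integer k. -/
/-- The formal power series `(1 - x^k)^α` over `ℝ`, interpreted via the formal binomial
series `(1 - y)^α = ∑_{i ≥ 0} binom(α, i) (-1)^i y^i` with `y = x^k`. -/
noncomputable def oneSubXPow (α : ℝ) (k : ℕ) : PowerSeries ℝ :=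
  PowerSeries.mk fun n => if k ∣ n then rbinom α (n / k) * (-1) ^ (n / k) else 0

/-!
Writing `c_β(m) = ∏_{j<m} (β + j)/(j + 1)` for the coefficient of `y^m` in `(1 - y)^{-β}`, the
nonzero coefficients of `(1 - x^{2k})^{-β}` are the `c_β(m)`, at `x^{2km}`, while `2(1 - x^k)^{-β}`
has `2 c_β(2m)` at the same place. For `β ≥ 0` all `c_β(m)` are nonnegative, and
`c_β(2m) = c_β(m) ∏_{j<m} (β + m + j)/(m + j + 1)`, where the product is at least the telescoping
product `∏_{j<m} (m + j)/(m + j + 1) = 1/2`.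
-/

open Finset

noncomputable def negBinomCoeff (β : ℝ) (m : ℕ) : ℝ :=
  ∏ j ∈ range m, (β + j) / (j + 1)

lemma rbinom_neg_mul_neg_one_pow (β : ℝ) (m : ℕ) :
    rbinom (-β) m * (-1) ^ m = negBinomCoeff β m := by
  have hsign : ∏ j ∈ range m, (-β - j) = (-1) ^ m * ∏ j ∈ range m, (β + j) :=
    calc ∏ j ∈ range m, (-β - j) = ∏ j ∈ range m, -(β + j) := prod_congr rfl fun _ _ => by ring
      _ = _ := by rw [prod_neg, card_range]
  have hfact : (m.factorial : ℝ) = ∏ j ∈ range m, ((j : ℝ) + 1) := by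
    rw [← prod_range_add_one_eq_factorial]
    push_cast
    rfl
  rw [rbinom, hsign, negBinomCoeff, prod_div_distrib, hfact, mul_div_assoc, mul_right_comm,
    ← mul_pow, neg_one_mul, neg_neg, one_pow, one_mul]

lemma negBinomCoeff_nonneg {β : ℝ} (hβ : 0 ≤ β) (m : ℕ) : 0 ≤ negBinomCoeff β m :=
  prod_nonneg fun _ _ => by positivity

lemma negBinomCoeff_add (β : ℝ) (m n : ℕ) :
    negBinomCoeff β (m + n) = negBinomCoeff β m * ∏ j ∈ range n, (β + (m + j)) / (m + j + 1) := by
  simp only [negBinomCoeff, prod_range_add, Nat.cast_add, add_assoc]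

lemma prod_range_div_add_one {a : ℝ} (ha : 0 < a) (n : ℕ) :
    ∏ j ∈ range n, (a + j) / (a + j + 1) = a / (a + n) := by
  induction n with
  | zero => simp [ha.ne']
  | succ n ih =>
    rw [prod_range_succ, ih]
    push_cast
    field_simp
    ring

lemma negBinomCoeff_le_two_mul {β : ℝ} (hβ : 0 ≤ β) (m : ℕ) :
    negBinomCoeff β m ≤ 2 * negBinomCoeff β (2 * m) := by
  rcases Nat.eq_zero_or_pos m with rfl | hm
  · simp [negBinomCoeff]
  have hm' : (0 : ℝ) < m := by exact_mod_cast hm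
  have half_le : 1 / 2 ≤ ∏ j ∈ range m, (β + (m + j)) / (m + j + 1) :=
    calc (1 : ℝ) / 2 = ∏ j ∈ range m, ((m : ℝ) + j) / (m + j + 1) := by
          rw [prod_range_div_add_one hm']
          field_simp
          ring
      _ ≤ _ := prod_le_prod (fun _ _ => by positivity) fun _ _ =>
          div_le_div_of_nonneg_right (by linarith) (by positivity)
  rw [two_mul m, negBinomCoeff_add]
  nlinarith [negBinomCoeff_nonneg hβ m]

lemma coeff_oneSubXPow_mul (α : ℝ) {k : ℕ} (hk : 0 < k) (m : ℕ) :
    PowerSeries.coeff (k * m) (oneSubXPow α k) = rbinom α m * (-1) ^ m := by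
  rw [oneSubXPow, PowerSeries.coeff_mk, if_pos (dvd_mul_right k m), Nat.mul_div_cancel_left m hk]

lemma coeff_oneSubXPow_of_not_dvd (α : ℝ) {k n : ℕ} (h : ¬ k ∣ n) :
    PowerSeries.coeff n (oneSubXPow α k) = 0 := by
  rw [oneSubXPow, PowerSeries.coeff_mk, if_neg h]

lemma coeff_oneSubXPow_neg_nonneg {β : ℝ} (hβ : 0 ≤ β) (k n : ℕ) :
    0 ≤ PowerSeries.coeff n (oneSubXPow (-β) k) := by
  rw [oneSubXPow, PowerSeries.coeff_mk]
  split_ifs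
  · exact rbinom_neg_mul_neg_one_pow β _ ▸ negBinomCoeff_nonneg hβ _
  · exact le_rfl

lemma coeff_oneSubXPow_two_mul_le {β : ℝ} (hβ : 0 ≤ β) (k n : ℕ) :
    PowerSeries.coeff n (oneSubXPow (-β) (2 * k)) ≤
      2 * PowerSeries.coeff n (oneSubXPow (-β) k) := by
  have hnonneg := coeff_oneSubXPow_neg_nonneg hβ k n
  rcases Nat.eq_zero_or_pos k with rfl | hk
  · rw [mul_zero]
    linarith
  by_cases hdvd : 2 * k ∣ n
  · obtain ⟨m, rfl⟩ := hdvd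
    rw [coeff_oneSubXPow_mul _ (by omega), mul_comm 2 k, mul_assoc, coeff_oneSubXPow_mul _ hk,
      rbinom_neg_mul_neg_one_pow, rbinom_neg_mul_neg_one_pow]
    exact negBinomCoeff_le_two_mul hβ m
  · rw [coeff_oneSubXPow_of_not_dvd _ hdvd]
    linarith

theorem coeff_nonneg_and_le_general (k : ℕ) (n : ℕ) :
    0 ≤ PowerSeries.coeff n (oneSubXPow (-(2 * k : ℝ)⁻¹) (2 * k)) ∧
    PowerSeries.coeff n (oneSubXPow (-(2 * k : ℝ)⁻¹) (2 * k)) ≤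
      PowerSeries.coeff n (2 * oneSubXPow (-(2 * k : ℝ)⁻¹) k) := by
  have hβ : 0 ≤ (2 * k : ℝ)⁻¹ := by positivity
  rw [← map_ofNat PowerSeries.C 2, PowerSeries.coeff_C_mul]
  exact ⟨coeff_oneSubXPow_neg_nonneg hβ _ n, coeff_oneSubXPow_two_mul_le hβ k n⟩

/-- For every positive integer `k`, each coefficient of the formal power series
`(1 - x^{2k})^{-1/(2k)}` is nonnegative and bounded above by the corresponding
coefficient of `2(1 - x^k)^{-1/(2k)}`. -/
theorem coeff_nonneg_and_le (k : ℕ) (hk : 1 ≤ k) (n : ℕ) :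
    0 ≤ PowerSeries.coeff n (oneSubXPow (-(2 * k : ℝ)⁻¹) (2 * k)) ∧
    PowerSeries.coeff n (oneSubXPow (-(2 * k : ℝ)⁻¹) (2 * k)) ≤
      PowerSeries.coeff n (2 * oneSubXPow (-(2 * k : ℝ)⁻¹) k) :=
  coeff_nonneg_and_le_general k n
end

section
/- Fix w ∈ S_3 equal to the product of the braids' underlying permutations. Let β₁,…,β_k ∈ Br_3 be positive pure braids with max writhe L such that no g ∈ SL(2,ℤ) satisfies |tr(g·γ(β_i))| ≤ 2 for all i, where γ is the reduced Burau representation at t = −1. Then for any integer N ≥ L + 1, the number of tuples (w₁,…,w_N) ∈ S_3^N with w₁⋯w_N = w and |tr(γ(σ_{w₁}⋯σ_{w_N}))| > 2 is at least 6^{N−L−1}. -/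
def braidRel3 : Set (FreeGroup (Fin 2)) :=
  {FreeGroup.of 0 * FreeGroup.of 1 * FreeGroup.of 0 *
    (FreeGroup.of 1 * FreeGroup.of 0 * FreeGroup.of 1)⁻¹}

/-- The braid group on 3 strands. -/
def BraidGroup3 : Type := PresentedGroup braidRel3

noncomputable instance : Group BraidGroup3 :=
  inferInstanceAs (Group (PresentedGroup braidRel3))

def braidSigma1 : BraidGroup3 := PresentedGroup.of 0

def braidSigma2 : BraidGroup3 := PresentedGroup.of 1

/-!
Every prefix `(w₁, …, w_M)` with `M = N - L - 1` extends to a good tuple. Put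
`u = (w₁ ⋯ w_M)⁻¹ w`; by hypothesis some `βᵢ` makes `|tr (γ(σ_{w₁} ⋯ σ_{w_M} σ_u) γ(βᵢ))| > 2`.
Writing the positive braid `βᵢ` as a word in `σ₁, σ₂` (of length its writhe, at most `L`),
padded by identities to length `L`, and appending it after `u` gives a tuple of length `N`
whose simple braids multiply to `σ_{w₁} ⋯ σ_{w_M} σ_u βᵢ` and whose permutations multiply to
`w`, since `βᵢ` is pure. Distinct prefixes give distinct tuples, so there are at least
`6 ^ M` of them.
-/

theorem map_list_prod_eq_ofAdd_length {M : Type*} [Monoid M] (wr : M →* Multiplicative ℤ)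
    {l : List M} (hl : ∀ x ∈ l, wr x = Multiplicative.ofAdd 1) :
    wr l.prod = Multiplicative.ofAdd (l.length : ℤ) := by
  rw [map_list_prod, List.map_congr_left hl, List.map_const', List.prod_replicate,
    ← ofAdd_nsmul, nsmul_one]

theorem exists_padded_word_of_mem_closure {G P : Type*} [Monoid G] [Monoid P]
    (π : G →* P) (wr : G →* Multiplicative ℤ) (sb : P → G) (hsb1 : sb 1 = 1) {S : Set G}
    (hS : ∀ x ∈ S, sb (π x) = x ∧ wr x = Multiplicative.ofAdd 1)
    {β : G} (hβ : β ∈ Submonoid.closure S) {L : ℕ} (hL : Multiplicative.toAdd (wr β) ≤ L) :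
    ∃ v : List P, v.length = L ∧ v.prod = π β ∧ (v.map sb).prod = β := by
  obtain ⟨l, hlS, rfl⟩ := Submonoid.exists_list_of_mem_closure hβ
  have hlen : l.length ≤ L := by
    rw [map_list_prod_eq_ofAdd_length wr fun x hx => (hS x (hlS x hx)).2, toAdd_ofAdd] at hL
    exact_mod_cast hL
  have hsbπ : (l.map π).map sb = l := by
    rw [List.map_map]
    exact List.map_congr_left (fun x hx => (hS x (hlS x hx)).1) |>.trans (List.map_id l)
  refine ⟨List.replicate (L - l.length) 1 ++ l.map π, ?_, ?_, ?_⟩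
  · simp only [List.length_append, List.length_replicate, List.length_map]
    omega
  · simp [map_list_prod]
  · simp [hsbπ, hsb1]

theorem pow_card_le_card_of_forall_exists_append {α : Type*} [Fintype α] {M N : ℕ}
    (hMN : M ≤ N) (p : List α → Prop)
    (h : ∀ t : Fin M → α, ∃ s : List α, M + s.length = N ∧ p (List.ofFn t ++ s)) :
    Fintype.card α ^ M ≤ Nat.card {f : Fin N → α // p (List.ofFn f)} := by
  have hsurj : Function.Surjective
      (fun f : {f : Fin N → α // p (List.ofFn f)} => fun j : Fin M => f.1 (Fin.castLE hMN j)) := by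
    intro t
    obtain ⟨s, hs, hp⟩ := h t
    have hlen : (List.ofFn t ++ s).length = N := by simpa using hs
    refine ⟨⟨fun j => (List.ofFn t ++ s)[j.1], ?_⟩, ?_⟩
    · convert hp
      exact List.ext_getElem (by simpa using hlen.symm) (by simp)
    · funext j
      simp [List.getElem_append_left]
  simpa [Nat.card_eq_fintype_card] using Nat.card_le_card_of_surjective _ hsurj

theorem many_tuples_with_large_trace_general
    (γ : BraidGroup3 →* Matrix.SpecialLinearGroup (Fin 2) ℤ)
    (π : BraidGroup3 →* Equiv.Perm (Fin 3))
    (hπ1 : π braidSigma1 = Equiv.swap 0 1) (hπ2 : π braidSigma2 = Equiv.swap 1 2)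
    (wr : BraidGroup3 →* Multiplicative ℤ)
    (hwr1 : wr braidSigma1 = Multiplicative.ofAdd 1)
    (hwr2 : wr braidSigma2 = Multiplicative.ofAdd 1)
    (sb : Equiv.Perm (Fin 3) → BraidGroup3)
    (hsb1 : sb 1 = 1)
    (hsbs1 : sb (Equiv.swap 0 1) = braidSigma1)
    (hsbs2 : sb (Equiv.swap 1 2) = braidSigma2)
    (k : ℕ) (β : Fin k → BraidGroup3)
    (hpos : ∀ i, β i ∈ Submonoid.closure ({braidSigma1, braidSigma2} : Set BraidGroup3))
    (hpure : ∀ i, π (β i) = 1)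
    (L : ℕ)
    (hLub : ∀ i, Multiplicative.toAdd (wr (β i)) ≤ (L : ℤ))
    (hg : ¬ ∃ g : Matrix.SpecialLinearGroup (Fin 2) ℤ,
      ∀ i, |((g * γ (β i) : Matrix.SpecialLinearGroup (Fin 2) ℤ) :
        Matrix (Fin 2) (Fin 2) ℤ).trace| ≤ 2)
    (N : ℕ) (hN : L + 1 ≤ N) (w : Equiv.Perm (Fin 3)) :
    6 ^ (N - L - 1) ≤
      Nat.card {f : Fin N → Equiv.Perm (Fin 3) //
        (List.ofFn f).prod = w ∧
        |((γ ((List.ofFn fun j => sb (f j)).prod) :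
            Matrix.SpecialLinearGroup (Fin 2) ℤ) : Matrix (Fin 2) (Fin 2) ℤ).trace| > 2} := by
  push Not at hg
  have hgen : ∀ x ∈ ({braidSigma1, braidSigma2} : Set BraidGroup3),
      sb (π x) = x ∧ wr x = Multiplicative.ofAdd 1 := by
    rintro x (rfl | rfl)
    exacts [⟨by rw [hπ1, hsbs1], hwr1⟩, ⟨by rw [hπ2, hsbs2], hwr2⟩]
  have hcount := pow_card_le_card_of_forall_exists_append (M := N - L - 1) (N := N) (by omega)
    (fun l => l.prod = w ∧
      2 < |((γ (l.map sb).prod : Matrix.SpecialLinearGroup (Fin 2) ℤ) :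
        Matrix (Fin 2) (Fin 2) ℤ).trace|) ?_
  · simpa [Fintype.card_perm, Nat.factorial, List.map_ofFn, Function.comp_def] using hcount
  intro t
  set u := (List.ofFn t).prod⁻¹ * w
  obtain ⟨i, hi⟩ := hg (γ (((List.ofFn t).map sb).prod * sb u))
  obtain ⟨v, hv_len, hv_prod, hv_sb⟩ :=
    exists_padded_word_of_mem_closure π wr sb hsb1 hgen (hpos i) (hLub i)
  refine ⟨u :: v, by simp only [List.length_cons, hv_len]; omega, ?_, ?_⟩
  · simp [hv_prod, hpure, u]
  · simpa [hv_sb, mul_assoc] using hi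

/-- Lemma 3.2 of the paper: let `γ : Br₃ → SL(2,ℤ)` be the reduced Burau representation
at `t = -1` (determined by `σ₁ ↦ [[1,1],[0,1]]`, `σ₂ ↦ [[1,0],[-1,1]]`), `π : Br₃ → S₃`
the canonical projection, `wr : Br₃ → ℤ` the writhe (sending each `σᵢ` to `1`), and
`sb : S₃ → Br₃` the simple-braid section (`sb(s₁) = σ₁`, `sb(s₂) = σ₂`, etc.).
Let `β₁, …, β_k ∈ Br₃` be positive pure braids with maximal writhe `L`, such that no
`g ∈ SL(2,ℤ)` satisfies `|tr (g · γ(βᵢ))| ≤ 2` for all `i`. Then for any `N ≥ L + 1`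
and any `w ∈ S₃`, the number of tuples `(w₁, …, w_N) ∈ S₃^N` with `w₁ ⋯ w_N = w` and
`|tr (γ(σ_{w₁} ⋯ σ_{w_N}))| > 2` is at least `6^{N - L - 1}`. -/
theorem many_tuples_with_large_trace
    (γ : BraidGroup3 →* Matrix.SpecialLinearGroup (Fin 2) ℤ)
    (hγ1 : (γ braidSigma1 : Matrix (Fin 2) (Fin 2) ℤ) = !![1, 1; 0, 1])
    (hγ2 : (γ braidSigma2 : Matrix (Fin 2) (Fin 2) ℤ) = !![1, 0; -1, 1])
    (π : BraidGroup3 →* Equiv.Perm (Fin 3))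
    (hπ1 : π braidSigma1 = Equiv.swap 0 1) (hπ2 : π braidSigma2 = Equiv.swap 1 2)
    (wr : BraidGroup3 →* Multiplicative ℤ)
    (hwr1 : wr braidSigma1 = Multiplicative.ofAdd 1)
    (hwr2 : wr braidSigma2 = Multiplicative.ofAdd 1)
    (sb : Equiv.Perm (Fin 3) → BraidGroup3)
    (hsb1 : sb 1 = 1)
    (hsbs1 : sb (Equiv.swap 0 1) = braidSigma1)
    (hsbs2 : sb (Equiv.swap 1 2) = braidSigma2)
    (hsbs12 : sb (Equiv.swap 0 1 * Equiv.swap 1 2) = braidSigma1 * braidSigma2)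
    (hsbs21 : sb (Equiv.swap 1 2 * Equiv.swap 0 1) = braidSigma2 * braidSigma1)
    (hsbs121 : sb (Equiv.swap 0 2) = braidSigma1 * braidSigma2 * braidSigma1)
    (k : ℕ) (hk : 1 ≤ k) (β : Fin k → BraidGroup3)
    (hpos : ∀ i, β i ∈ Submonoid.closure ({braidSigma1, braidSigma2} : Set BraidGroup3))
    (hpure : ∀ i, π (β i) = 1)
    (L : ℕ)
    (hLub : ∀ i, Multiplicative.toAdd (wr (β i)) ≤ (L : ℤ))
    (hLmax : ∃ i, Multiplicative.toAdd (wr (β i)) = (L : ℤ))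
    (hg : ¬ ∃ g : Matrix.SpecialLinearGroup (Fin 2) ℤ,
      ∀ i, |((g * γ (β i) : Matrix.SpecialLinearGroup (Fin 2) ℤ) :
        Matrix (Fin 2) (Fin 2) ℤ).trace| ≤ 2)
    (N : ℕ) (hN : L + 1 ≤ N) (w : Equiv.Perm (Fin 3)) :
    6 ^ (N - L - 1) ≤
      Nat.card {f : Fin N → Equiv.Perm (Fin 3) //
        (List.ofFn f).prod = w ∧
        |((γ ((List.ofFn fun j => sb (f j)).prod) :
            Matrix.SpecialLinearGroup (Fin 2) ℤ) : Matrix (Fin 2) (Fin 2) ℤ).trace| > 2} :=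
  many_tuples_with_large_trace_general γ π hπ1 hπ2 wr hwr1 hwr2 sb hsb1 hsbs1 hsbs2 k β hpos hpure L
    hLub hg N hN w
end

section
/- Let c be a 3N-cycle in S_{3N} with orbit sequence a_0 = 1, a_{i+1} = c(a_i). Define p_i(c) ∈ S_3 (for i = 1,…,N) as the composite of: the order-preserving bijection {1,2,3} → {a_{i−1}, a_{i−1+N}, a_{i−1+2N}}, the map a_k ↦ a_{k+1}, and the order-preserving bijection {a_i, a_{i+N}, a_{i+2N}} → {1,2,3}. Then the product p_1(c)p_2(c)⋯p_N(c) is a 3-cycle in S_3; specifically it sends 1 ↦ 2 if a_N < a_{2N} and 1 ↦ 3 if a_{2N} < a_N. -/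
/-- The orbit sequence of `1` (encoded as `0 : Fin (3N)`) under a permutation `c`:
`a i = cⁱ(1)`. -/
def orb (N : ℕ) (h : 0 < 3 * N) (c : Equiv.Perm (Fin (3 * N))) (i : ℕ) : Fin (3 * N) :=
  (c ^ i) ⟨0, h⟩

/-- The 3-element set `{a_i, a_{i+N}, a_{i+2N}}`. -/
def tripleSet (N : ℕ) (h : 0 < 3 * N) (c : Equiv.Perm (Fin (3 * N))) (i : ℕ) :
    Finset (Fin (3 * N)) :=
  {orb N h c i, orb N h c (i + N), orb N h c (i + 2 * N)}

/-- The `t`-th smallest element of a finset of `Fin (3N)` (`t` is 0-based). -/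
def nthSmallest (N : ℕ) (h : 0 < 3 * N) (s : Finset (Fin (3 * N))) (t : ℕ) : Fin (3 * N) :=
  (s.sort (· ≤ ·)).getD t ⟨0, h⟩

/-! Chaining the defining relations of the `p_i` shows that `p_N ⋯ p_1` is the permutation of
ranks induced by `c^N` from `{a_0, a_N, a_{2N}}` to `{a_N, a_{2N}, a_{3N}}`, which is the same set
because `a_{3N} = a_0`. On it `c^N` cycles `a_0 ↦ a_N ↦ a_{2N} ↦ a_0`, and `a_0 = 1` is the
smallest element, so the induced permutation of ranks is `1 ↦ 2 ↦ 3 ↦ 1` when `a_N < a_{2N}` and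
`1 ↦ 3 ↦ 2 ↦ 1` otherwise. -/

open Equiv

theorem Finset.sort_triple_of_lt {α : Type*} [LinearOrder α] {x y z : α} (hxy : x < y)
    (hyz : y < z) : ({x, y, z} : Finset α).sort (· ≤ ·) = [x, y, z] := by
  rw [Finset.sort_insert, Finset.sort_insert, Finset.sort_singleton] <;>
    simp [hxy.le, hyz.le, (hxy.trans hyz).le, hxy.ne, hyz.ne, (hxy.trans hyz).ne]

theorem apply_prod_reverse_ofFn_eq_pow_apply {ι β : Type*} (p : ℕ → Perm ι) (e : ℕ → ι → β)
    (g : Perm β) {N : ℕ} (h : ∀ i < N, ∀ t, e (i + 1) (p (i + 1) t) = g (e i t)) :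
    ∀ k ≤ N, ∀ t,
      e k ((List.ofFn fun j : Fin k => p (j + 1)).reverse.prod t) = (g ^ k) (e 0 t)
  | 0, _, t => by simp
  | k + 1, hk, t => by
    simp only [List.ofFn_succ', Fin.val_castSucc, Fin.val_last, List.concat_eq_append,
      List.reverse_append, List.reverse_singleton, List.singleton_append, List.prod_cons,
      Perm.mul_apply]
    rw [h k hk, apply_prod_reverse_ofFn_eq_pow_apply p e g h k (by omega), pow_succ',
      Perm.mul_apply]

theorem injective_triple_of_ne {α : Type*} {x y z : α} (hxy : x ≠ y) (hyz : y ≠ z)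
    (hxz : x ≠ z) : Function.Injective ![x, y, z] := by
  intro i j h
  fin_cases i <;> fin_cases j <;> simp_all [eq_comm]

section RotatedTriple

variable {α : Type*} {x y z : α} (hxy : x ≠ y) (hyz : y ≠ z) (hxz : x ≠ z) {σ : Perm (Fin 3)}
include hxy hyz hxz

theorem eq_swap_mul_swap_of_rotate_left (h : ∀ t, ![x, y, z] (σ t) = ![y, z, x] t) :
    σ = swap 0 1 * swap 1 2 := by
  ext t : 1
  apply injective_triple_of_ne hxy hyz hxz
  rw [h]
  fin_cases t <;> rfl

theorem eq_swap_mul_swap_of_rotate_right (h : ∀ t, ![x, y, z] (σ t) = ![z, x, y] t) :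
    σ = swap 1 2 * swap 0 1 := by
  ext t : 1
  apply injective_triple_of_ne hxy hyz hxz
  rw [h]
  fin_cases t <;> rfl

end RotatedTriple

theorem isThreeCycle_swap_zero_one_mul_swap_one_two :
    (swap (0 : Fin 3) 1 * swap 1 2).IsThreeCycle := by
  simpa [swap_comm] using Perm.isThreeCycle_swap_mul_swap_same (a := (1 : Fin 3)) (b := 0) (c := 2)
    (by decide) (by decide) (by decide)

theorem isThreeCycle_swap_one_two_mul_swap_zero_one :
    (swap (1 : Fin 3) 2 * swap 0 1).IsThreeCycle := by
  simpa [swap_comm] using Perm.isThreeCycle_swap_mul_swap_same (a := (1 : Fin 3)) (b := 2) (c := 0)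
    (by decide) (by decide) (by decide)

theorem nthSmallest_triple_of_lt {N : ℕ} (h : 0 < 3 * N) {x y z : Fin (3 * N)} (hxy : x < y)
    (hyz : y < z) (t : Fin 3) : nthSmallest N h {x, y, z} t = ![x, y, z] t := by
  rw [nthSmallest, Finset.sort_triple_of_lt hxy hyz]
  fin_cases t <;> rfl

section Orbit

variable {N : ℕ} {hN : 0 < 3 * N} {c : Perm (Fin (3 * N))}

theorem pow_apply_orb (m n : ℕ) : (c ^ n) (orb N hN c m) = orb N hN c (n + m) := by
  rw [orb, orb, pow_add, Perm.mul_apply]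

variable (hc : c.IsCycle) (hsupp : c.support.card = 3 * N)
include hc hsupp

theorem orb_eq_orb_iff {m n : ℕ} : orb N hN c m = orb N hN c n ↔ m ≡ n [MOD 3 * N] := by
  have hmem : (⟨0, hN⟩ : Fin (3 * N)) ∈ c.support := by
    rw [Finset.eq_univ_of_card _ (hsupp.trans (Fintype.card_fin _).symm)]
    exact Finset.mem_univ _
  have hcycleOn : c.IsCycleOn c.support := by
    rw [Perm.coe_support_eq_set_support]
    exact hc.isCycleOn
  simpa only [orb, hsupp] using hcycleOn.pow_apply_eq_pow_apply hmem

theorem orb_three_mul : orb N hN c (3 * N) = orb N hN c 0 :=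
  (orb_eq_orb_iff hc hsupp).2 (Nat.modEq_zero_iff_dvd.2 dvd_rfl)

theorem orb_ne_orb_of_lt {m n : ℕ} (hmn : m < n) (hn : n < 3 * N) :
    orb N hN c m ≠ orb N hN c n := fun h =>
  hmn.ne (((orb_eq_orb_iff hc hsupp).1 h).eq_of_lt_of_lt (hmn.trans hn) hn)

theorem orb_zero_lt {n : ℕ} (hn0 : 0 < n) (hn : n < 3 * N) : orb N hN c 0 < orb N hN c n :=
  lt_of_le_of_ne (Nat.zero_le _) (orb_ne_orb_of_lt hc hsupp hn0 hn)

theorem pow_apply_orb_zero_self_two_mul :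
    (c ^ N) (orb N hN c 0) = orb N hN c N ∧ (c ^ N) (orb N hN c N) = orb N hN c (2 * N) ∧
      (c ^ N) (orb N hN c (2 * N)) = orb N hN c 0 := by
  refine ⟨pow_apply_orb 0 N, by rw [pow_apply_orb, two_mul], ?_⟩
  rw [pow_apply_orb, ← orb_three_mul hc hsupp]
  ring_nf

theorem tripleSet_eq_tripleSet_zero : tripleSet N hN c N = tripleSet N hN c 0 := by
  have h3 : orb N hN c (N + 2 * N) = orb N hN c 0 := by
    rw [← pow_apply_orb, (pow_apply_orb_zero_self_two_mul hc hsupp).2.2]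
  simp only [tripleSet, h3, zero_add, ← two_mul]
  ext; simp only [Finset.mem_insert, Finset.mem_singleton]; tauto

end Orbit

/-- Let `c` be a `3N`-cycle in `S_{3N}` with orbit sequence `a_0 = 1`, `a_{i+1} = c(a_i)`,
and for `i = 1, …, N` let `p_i ∈ S₃` be the composite of the order-preserving bijection
`{1,2,3} → {a_{i-1}, a_{i-1+N}, a_{i-1+2N}}`, the map `a_k ↦ a_{k+1}`, and the
order-preserving bijection `{a_i, a_{i+N}, a_{i+2N}} → {1,2,3}` (so that `p_i` is
characterized by: the image under `c` of the `t`-th smallest element of the first set is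
the `p_i(t)`-th smallest element of the second set). Then the product `p_1 p_2 ⋯ p_N`
(composed so that `p_1` acts first) is a 3-cycle; it sends `1 ↦ 2` if `a_N < a_{2N}` and
`1 ↦ 3` if `a_{2N} < a_N` (with `{1,2,3}` encoded as `Fin 3 = {0,1,2}`). -/
theorem product_of_induced_permutations_is_three_cycle
    (N : ℕ) (hN : 0 < 3 * N) (c : Equiv.Perm (Fin (3 * N)))
    (hc : c.IsCycle) (hsupp : c.support.card = 3 * N)
    (p : ℕ → Equiv.Perm (Fin 3))
    (hp : ∀ i, 1 ≤ i → i ≤ N → ∀ t : Fin 3,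
      nthSmallest N hN (tripleSet N hN c i) ((p i t) : Fin 3).val =
        c (nthSmallest N hN (tripleSet N hN c (i - 1)) t.val)) :
    (((List.ofFn fun j : Fin N => p (j.val + 1)).reverse).prod).IsThreeCycle ∧
    (orb N hN c N < orb N hN c (2 * N) →
      ((List.ofFn fun j : Fin N => p (j.val + 1)).reverse).prod =
        Equiv.swap 0 1 * Equiv.swap 1 2) ∧
    (orb N hN c (2 * N) < orb N hN c N →
      ((List.ofFn fun j : Fin N => p (j.val + 1)).reverse).prod =
        Equiv.swap 1 2 * Equiv.swap 0 1) := by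
  set P := ((List.ofFn fun j : Fin N => p (j.val + 1)).reverse).prod
  have hP : ∀ t, nthSmallest N hN (tripleSet N hN c N) (P t) =
      (c ^ N) (nthSmallest N hN (tripleSet N hN c 0) t) :=
    apply_prod_reverse_ofFn_eq_pow_apply p (fun k t => nthSmallest N hN (tripleSet N hN c k) t) c
      (fun i hi t => hp (i + 1) i.succ_pos hi t) N le_rfl
  rw [tripleSet_eq_tripleSet_zero hc hsupp] at hP
  have h0N : orb N hN c 0 < orb N hN c N := orb_zero_lt hc hsupp (by omega) (by omega)
  have h02N : orb N hN c 0 < orb N hN c (2 * N) := orb_zero_lt hc hsupp (by omega) (by omega)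
  have hNN : orb N hN c N ≠ orb N hN c (2 * N) := orb_ne_orb_of_lt hc hsupp (by omega) (by omega)
  obtain ⟨hc0, hcN, hc2N⟩ := pow_apply_orb_zero_self_two_mul (hN := hN) hc hsupp
  rcases hNN.lt_or_gt with h | h
  · simp only [tripleSet, zero_add, nthSmallest_triple_of_lt hN h0N h] at hP
    have hPeq : P = swap 0 1 * swap 1 2 :=
      eq_swap_mul_swap_of_rotate_left h0N.ne h.ne h02N.ne fun t => by
        rw [hP]; fin_cases t <;> simp [hc0, hcN, hc2N]
    exact ⟨hPeq ▸ isThreeCycle_swap_zero_one_mul_swap_one_two, fun _ => hPeq,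
      fun h' => absurd h (lt_asymm h')⟩
  · simp only [tripleSet, zero_add, Finset.pair_comm, nthSmallest_triple_of_lt hN h02N h] at hP
    have hPeq : P = swap 1 2 * swap 0 1 :=
      eq_swap_mul_swap_of_rotate_right h02N.ne h.ne h0N.ne fun t => by
        rw [hP]; fin_cases t <;> simp [hc0, hcN, hc2N]
    exact ⟨hPeq ▸ isThreeCycle_swap_one_two_mul_swap_zero_one, fun h' => absurd h (lt_asymm h'),
      fun _ => hPeq⟩
end

section
/- With the map c ↦ (p₁(c),…,p_N(c)) from 3N-cycles in S_{3N} to N-tuples in S_3^N whose product is a 3-cycle (as defined via the orbit of 1 and order-preserving relabelings): every fiber of this map has cardinality (3N−1)!/(2·6^{N−1}); i.e., the fibers are equinumerous over the 2·6^{N−1} possible targets. -/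
/-- `c ↦ p(c)`: the 3N-cycle `c` maps to the tuple `(p₁(c), …, p_N(c)) ∈ S₃^N`, where
`p_i(c)` is characterized by: the image under `c` of the `t`-th smallest element of
`{a_{i-1}, a_{i-1+N}, a_{i-1+2N}}` is the `p_i(c)(t)`-th smallest element of
`{a_i, a_{i+N}, a_{i+2N}}`. -/
def inducedTuple (N : ℕ) (h : 0 < 3 * N) (c : Equiv.Perm (Fin (3 * N)))
    (v : Fin N → Equiv.Perm (Fin 3)) : Prop :=
  ∀ j : Fin N, ∀ t : Fin 3,
    nthSmallest N h (tripleSet N h c (j.val + 1)) ((v j t) : Fin 3).val =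
      c (nthSmallest N h (tripleSet N h c j.val) t.val)

/-
For a `3N`-cycle `c` let `λ_c : Fin N × Fin 3 ≃ Fin (3N)` send `(j, r)` to the `r`-th smallest
element of the `j`-th triple. The defining property of `v = p(c)` says exactly that `λ_c` conjugates
`c` to the skew shift `S_v : (j, r) ↦ (j + 1, v_j r)`. Conversely, let `λ` be increasing on every
block `{j} × Fin 3` with `λ (0, 0) = 0`, and let `v_N ⋯ v_1` be a 3-cycle. Since `S_v ^ N` acts on
block `0` by that product, the `S_v`-orbit of `(0, 0)` meets every block in all three ranks, so
`λ S_v λ⁻¹` is a `3N`-cycle with sorted labelling `λ` and tuple `v`. Thus `c ↦ (λ_c, p(c))` is a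
bijection onto such pairs `(λ, v)`: every fibre is in bijection with the same set of labellings,
and the `(3N - 1)!` cycles are spread evenly over the `2 · 6 ^ (N - 1)` admissible tuples.
-/

open Equiv Equiv.Perm Finset

namespace CycleTriples

section Perm

variable {α β : Type*}

theorem isCycleOn_univ_iff_sameCycle {f : Perm α} :
    f.IsCycleOn Set.univ ↔ ∀ x y, f.SameCycle x y := by
  simp [IsCycleOn, Set.bijOn_univ, f.bijective]

theorem sameCycle_permCongr (e : α ≃ β) {f : Perm α} {x y : β} :
    (e.permCongr f).SameCycle x y ↔ f.SameCycle (e.symm x) (e.symm y) := by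
  have hpow (i : ℤ) : e.permCongr f ^ i = e.permCongr (f ^ i) := by
    rw [← permCongrHom_coe, map_zpow]
  simp only [SameCycle, hpow, permCongr_apply, ← e.eq_symm_apply]

theorem isCycleOn_univ_permCongr (e : α ≃ β) {f : Perm α} :
    (e.permCongr f).IsCycleOn Set.univ ↔ f.IsCycleOn Set.univ := by
  simp only [isCycleOn_univ_iff_sameCycle, sameCycle_permCongr]
  exact ⟨fun h x y => by simpa using h (e x) (e y), fun h x y => h _ _⟩

variable [Fintype α]

theorem isCycle_and_card_support_eq_card_iff [DecidableEq α] [Nontrivial α] {f : Perm α} :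
    f.IsCycle ∧ #f.support = Fintype.card α ↔ f.IsCycleOn Set.univ := by
  constructor
  · rintro ⟨hf, hs⟩
    have hmoved : {x | f x ≠ x} = Set.univ := by
      simpa [Set.eq_univ_iff_forall] using Finset.eq_univ_iff_forall.1 (eq_univ_of_card _ hs)
    exact hmoved ▸ hf.isCycleOn
  · intro hf
    have hmoved (x : α) : f x ≠ x := hf.apply_ne Set.nontrivial_univ (Set.mem_univ x)
    refine ⟨isCycle_iff_exists_isCycleOn.2 ⟨_, Set.nontrivial_univ, hf, fun _ _ => trivial⟩,
      ?_⟩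
    rw [Finset.eq_univ_of_forall (fun x => mem_support.2 (hmoved x)), card_univ]

theorem _root_.Equiv.Perm.IsCycleOn.pow_apply_eq_pow_apply_univ {f : Perm α}
    (hf : f.IsCycleOn Set.univ) (a : α) {m n : ℕ} :
    (f ^ m) a = (f ^ n) a ↔ m ≡ n [MOD Fintype.card α] := by
  rw [← coe_univ] at hf
  exact hf.pow_apply_eq_pow_apply (mem_univ a)

end Perm

theorem val_finRotate {n : ℕ} (i : Fin n) : (finRotate n i : ℕ) = (i + 1) % n := by
  obtain ⟨n, rfl⟩ : ∃ m, n = m + 1 := ⟨n - 1, by have := i.pos; omega⟩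
  rw [finRotate_apply, Fin.val_add_one]
  split_ifs with h
  · simp [h, Fin.val_last]
  · rw [Nat.mod_eq_of_lt]; have := Fin.val_lt_last h; omega

def threeCycles : Finset (Perm (Fin 3)) := {swap 0 1 * swap 1 2, swap 1 2 * swap 0 1}

theorem mem_threeCycles_of_forall_ne {g : Perm (Fin 3)} :
    (∀ r, g r ≠ r) → g ∈ threeCycles := by
  revert g; decide

theorem exists_pow_apply_eq_of_mem_threeCycles {g : Perm (Fin 3)} :
    g ∈ threeCycles → ∀ s r : Fin 3, ∃ t : Fin 3, (g ^ (t : ℕ)) s = r := by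
  revert g; decide

section Orbit

variable {N : ℕ} (hN : 0 < 3 * N) (c : Perm (Fin (3 * N)))

theorem orb_succ (k : ℕ) : orb N hN c (k + 1) = c (orb N hN c k) := by
  rw [orb, orb, pow_succ', mul_apply]

theorem mem_tripleSet_iff {i : ℕ} {x : Fin (3 * N)} :
    x ∈ tripleSet N hN c i ↔ ∃ t : Fin 3, orb N hN c (i + t * N) = x := by
  simp only [tripleSet, mem_insert, mem_singleton, Fin.exists_fin_succ, Fin.exists_fin_zero]
  simp [eq_comm, two_mul]

theorem apply_mem_tripleSet_succ_iff {i : ℕ} {x : Fin (3 * N)} :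
    c x ∈ tripleSet N hN c (i + 1) ↔ x ∈ tripleSet N hN c i := by
  simp only [mem_tripleSet_iff, add_right_comm i 1, orb_succ, c.apply_eq_iff_eq]

variable {c} (hc : c.IsCycleOn Set.univ)
include hc

theorem orb_eq_orb_iff {i j : ℕ} : orb N hN c i = orb N hN c j ↔ i ≡ j [MOD 3 * N] := by
  simpa [orb] using hc.pow_apply_eq_pow_apply_univ ⟨0, hN⟩ (m := i) (n := j)

theorem tripleSet_length : tripleSet N hN c N = tripleSet N hN c 0 := by
  have h : orb N hN c (N + 2 * N) = orb N hN c 0 :=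
    (orb_eq_orb_iff hN hc).2 (by simp [Nat.ModEq, show N + 2 * N = 3 * N by ring])
  simp only [tripleSet, h, zero_add, show N + N = 2 * N by ring]
  ext; simp; tauto

theorem orb_block_injective :
    Function.Injective fun x : Fin N × Fin 3 => orb N hN c (x.1 + x.2 * N) := by
  rintro ⟨j, t⟩ ⟨j', t'⟩ h
  have hlt (j : Fin N) (t : Fin 3) : (j : ℕ) + t * N < 3 * N := by
    have := Nat.mul_le_mul_right N (Nat.le_of_lt_succ t.isLt); omega
  have e := (orb_eq_orb_iff hN hc).1 h
  rw [Nat.ModEq, Nat.mod_eq_of_lt (hlt j t), Nat.mod_eq_of_lt (hlt j' t')] at e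
  have hN₀ : 0 < N := by omega
  have ej : (j : ℕ) = j' := by
    simpa [Nat.mod_eq_of_lt j.isLt, Nat.mod_eq_of_lt j'.isLt] using congrArg (· % N) e
  have et : (t : ℕ) = t' := by
    simpa [Nat.add_mul_div_right _ _ hN₀, Nat.div_eq_of_lt j.isLt, Nat.div_eq_of_lt j'.isLt]
      using congrArg (· / N) e
  simp [Fin.ext ej, Fin.ext et]

end Orbit

section SortedLabeling

variable {N : ℕ} (hN : 0 < 3 * N) {c : Perm (Fin (3 * N))} (hc : c.IsCycleOn Set.univ)
include hc

theorem card_tripleSet (i : ℕ) : #(tripleSet N hN c i) = 3 := by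
  have himage : tripleSet N hN c i = univ.image fun t : Fin 3 => orb N hN c (i + t * N) := by
    ext x; simp [mem_tripleSet_iff]
  rw [himage, card_image_of_injective _ ?_, card_univ, Fintype.card_fin]
  intro t t' h
  have hlt (t : Fin 3) : (t : ℕ) * N < 3 * N := Nat.mul_lt_mul_of_pos_right t.isLt (by omega)
  have e := Nat.ModEq.add_left_cancel' i ((orb_eq_orb_iff hN hc).1 h)
  rw [Nat.ModEq, Nat.mod_eq_of_lt (hlt t), Nat.mod_eq_of_lt (hlt t')] at e
  exact Fin.ext (Nat.eq_of_mul_eq_mul_right (by omega) e)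

theorem eq_of_mem_tripleSet {j j' : Fin N} {x : Fin (3 * N)} (hx : x ∈ tripleSet N hN c j)
    (hx' : x ∈ tripleSet N hN c j') : j = j' := by
  obtain ⟨t, rfl⟩ := (mem_tripleSet_iff hN c).1 hx
  obtain ⟨t', h⟩ := (mem_tripleSet_iff hN c).1 hx'
  exact congrArg Prod.fst (orb_block_injective hN hc (a₁ := (j, t)) (a₂ := (j', t')) h.symm)

theorem nthSmallest_tripleSet (i : ℕ) (r : Fin 3) :
    nthSmallest N hN (tripleSet N hN c i) r =
      (tripleSet N hN c i).orderEmbOfFin (card_tripleSet hN hc i) r := by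
  simp [nthSmallest, orderEmbOfFin_apply, card_tripleSet hN hc i]

theorem nthSmallest_tripleSet_injective (i : ℕ) :
    Function.Injective fun r : Fin 3 => nthSmallest N hN (tripleSet N hN c i) r := by
  simpa only [nthSmallest_tripleSet hN hc] using (orderEmbOfFin _ _).injective

noncomputable def sortedLabeling : Fin N × Fin 3 ≃ Fin (3 * N) :=
  Equiv.ofBijective (fun x => nthSmallest N hN (tripleSet N hN c x.1) x.2) <| by
    refine (Fintype.bijective_iff_injective_and_card _).2 ⟨?_, by simp [mul_comm]⟩
    rintro ⟨j, r⟩ ⟨j', r'⟩ h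
    simp only [nthSmallest_tripleSet hN hc] at h
    obtain rfl :=
      eq_of_mem_tripleSet hN hc (h ▸ orderEmbOfFin_mem _ _ r) (orderEmbOfFin_mem _ _ r')
    simpa using h

theorem sortedLabeling_apply (x : Fin N × Fin 3) :
    sortedLabeling hN hc x = nthSmallest N hN (tripleSet N hN c x.1) x.2 := rfl

theorem strictMono_sortedLabeling (j : Fin N) :
    StrictMono fun r => sortedLabeling hN hc (j, r) := by
  simpa only [sortedLabeling_apply, nthSmallest_tripleSet hN hc]
    using (orderEmbOfFin _ _).strictMono

theorem sortedLabeling_zero : sortedLabeling hN hc (⟨0, by omega⟩, 0) = ⟨0, hN⟩ := by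
  have hmem : (⟨0, hN⟩ : Fin (3 * N)) ∈ tripleSet N hN c 0 := by
    simp [tripleSet, orb]
  rw [sortedLabeling_apply, nthSmallest_tripleSet hN hc]
  exact (orderEmbOfFin_zero _ three_pos).trans (le_antisymm (min'_le _ _ hmem) (Nat.zero_le _))

def rankPerm (j : Fin N) : Perm (Fin 3) :=
  ((tripleSet N hN c j).orderIsoOfFin (card_tripleSet hN hc j)).toEquiv.trans <|
    (c.subtypeEquiv fun _ => (apply_mem_tripleSet_succ_iff hN c).symm).trans
      ((tripleSet N hN c (j + 1)).orderIsoOfFin (card_tripleSet hN hc _)).symm.toEquiv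

theorem inducedTuple_rankPerm : inducedTuple N hN c (rankPerm hN hc) := by
  intro j t
  simp [rankPerm, nthSmallest_tripleSet hN hc, ← coe_orderIsoOfFin_apply]

theorem eq_rankPerm_of_inducedTuple {v : Fin N → Perm (Fin 3)} (hv : inducedTuple N hN c v) :
    v = rankPerm hN hc := by
  ext j t : 2
  exact nthSmallest_tripleSet_injective hN hc _ <|
    (hv j t).trans (inducedTuple_rankPerm hN hc j t).symm

end SortedLabeling

section SkewShift

variable {N : ℕ} (v : Fin N → Perm (Fin 3))

def skewShift : Perm (Fin N × Fin 3) := (finRotate N).prodShear v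

def partialProd (m : ℕ) : Perm (Fin 3) := ((List.ofFn v).take m).reverse.prod

theorem partialProd_succ {m : ℕ} (hm : m < N) :
    partialProd v (m + 1) = v ⟨m, hm⟩ * partialProd v m := by
  simp [partialProd, List.take_add_one, hm]

theorem partialProd_length : partialProd v N = (List.ofFn v).reverse.prod := by
  rw [partialProd, List.take_of_length_le (by simp)]

variable (hN₀ : 0 < N)

theorem skewShift_pow_apply_zero {m : ℕ} (hm : m ≤ N) (r : Fin 3) :
    (skewShift v ^ m) (⟨0, hN₀⟩, r) =
      (⟨m % N, Nat.mod_lt _ hN₀⟩, partialProd v m r) := by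
  induction m with
  | zero => simp [partialProd]
  | succ m ih =>
    have hmN : m % N = m := Nat.mod_eq_of_lt (by omega)
    rw [pow_succ', mul_apply, ih (by omega), partialProd_succ v (by omega)]
    simp only [skewShift, prodShear_apply, hmN, mul_apply, Prod.mk.injEq, and_true]
    exact Fin.ext (val_finRotate _)

theorem skewShift_pow_length_apply_zero (r : Fin 3) :
    (skewShift v ^ N) (⟨0, hN₀⟩, r) = (⟨0, hN₀⟩, partialProd v N r) := by
  rw [skewShift_pow_apply_zero v hN₀ le_rfl]
  exact Prod.ext (Fin.ext (Nat.mod_self N)) rfl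

theorem skewShift_pow_mul_length_apply_zero (t : ℕ) (r : Fin 3) :
    (skewShift v ^ (t * N)) (⟨0, hN₀⟩, r) = (⟨0, hN₀⟩, (partialProd v N ^ t) r) := by
  induction t generalizing r with
  | zero => simp
  | succ t ih =>
    rw [add_mul, one_mul, pow_add, mul_apply, skewShift_pow_length_apply_zero, ih, pow_succ,
      mul_apply]

theorem skewShift_pow_block_apply_zero (j : Fin N) (t : ℕ) (r : Fin 3) :
    (skewShift v ^ (j + t * N)) (⟨0, hN₀⟩, r) =
      (j, partialProd v j ((partialProd v N ^ t) r)) := by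
  rw [pow_add, mul_apply, skewShift_pow_mul_length_apply_zero v hN₀,
    skewShift_pow_apply_zero v hN₀ j.isLt.le]
  simp [Nat.mod_eq_of_lt j.isLt]

include hN₀ in
theorem isCycleOn_skewShift_iff :
    (skewShift v).IsCycleOn Set.univ ↔ (List.ofFn v).reverse.prod ∈ threeCycles := by
  rw [← partialProd_length]
  constructor
  · intro h
    refine mem_threeCycles_of_forall_ne fun r hr => ?_
    have hfix :
        (skewShift v ^ (1 * N)) (⟨0, hN₀⟩, r) = (skewShift v ^ 0) (⟨0, hN₀⟩, r) := by
      rw [skewShift_pow_mul_length_apply_zero, pow_one, hr, pow_zero, one_apply]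
    rw [h.pow_apply_eq_pow_apply_univ, Fintype.card_prod, Fintype.card_fin, Fintype.card_fin,
      Nat.ModEq, Nat.zero_mod, one_mul, Nat.mod_eq_of_lt (by omega)] at hfix
    omega
  · intro h
    suffices hz : ∀ y, (skewShift v).SameCycle (⟨0, hN₀⟩, 0) y from
      isCycleOn_univ_iff_sameCycle.2 fun x y => ((hz x).symm).trans (hz y)
    rintro ⟨j, r⟩
    obtain ⟨t, ht⟩ := exists_pow_apply_eq_of_mem_threeCycles h 0 ((partialProd v j)⁻¹ r)
    refine ⟨((j + t * N : ℕ) : ℤ), ?_⟩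
    rw [zpow_natCast, skewShift_pow_block_apply_zero, ht]
    simp

end SkewShift

section Conjugation

variable {N : ℕ} (hN : 0 < 3 * N)

theorem tripleSet_finRotate {c : Perm (Fin (3 * N))} (hc : c.IsCycleOn Set.univ) (j : Fin N) :
    tripleSet N hN c (finRotate N j) = tripleSet N hN c (j + 1) := by
  rw [val_finRotate]
  rcases (Nat.succ_le_of_lt j.isLt).lt_or_eq with h | h
  · rw [Nat.mod_eq_of_lt h]
  · rw [show (j : ℕ) + 1 = N from h, Nat.mod_self, tripleSet_length hN hc]

theorem inducedTuple_iff_permCongr {c : Perm (Fin (3 * N))} (hc : c.IsCycleOn Set.univ)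
    (v : Fin N → Perm (Fin 3)) :
    inducedTuple N hN c v ↔ (sortedLabeling hN hc).permCongr (skewShift v) = c := by
  have hshift (x : Fin N × Fin 3) : sortedLabeling hN hc (skewShift v x) =
      nthSmallest N hN (tripleSet N hN c (x.1 + 1)) (v x.1 x.2) := by
    simp only [skewShift, prodShear_apply, sortedLabeling_apply, tripleSet_finRotate hN hc]
  constructor
  · intro h
    ext y
    obtain ⟨⟨j, t⟩, rfl⟩ := (sortedLabeling hN hc).surjective y
    rw [permCongr_apply, symm_apply_apply, hshift, h j t, sortedLabeling_apply]
  · intro h j t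
    have := congrArg (· (sortedLabeling hN hc (j, t))) h
    rwa [permCongr_apply, symm_apply_apply, hshift] at this

abbrev SortedLabelings : Type :=
  {e : Fin N × Fin 3 ≃ Fin (3 * N) //
    e (⟨0, by omega⟩, 0) = ⟨0, hN⟩ ∧ ∀ j, StrictMono fun r => e (j, r)}

variable {hN}

theorem isCycleOn_permCongr_skewShift (e : SortedLabelings hN) {v : Fin N → Perm (Fin 3)}
    (hv : (List.ofFn v).reverse.prod ∈ threeCycles) :
    (e.1.permCongr (skewShift v)).IsCycleOn Set.univ :=
  (isCycleOn_univ_permCongr e.1).2 ((isCycleOn_skewShift_iff v (by omega)).2 hv)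

theorem sortedLabeling_permCongr (e : SortedLabelings hN) {v : Fin N → Perm (Fin 3)}
    (hv : (List.ofFn v).reverse.prod ∈ threeCycles) :
    sortedLabeling hN (isCycleOn_permCongr_skewShift e hv) = e.1 := by
  have hc := isCycleOn_permCongr_skewShift e hv
  have horb (k : ℕ) :
      orb N hN (e.1.permCongr (skewShift v)) k =
        e.1 ((skewShift v ^ k) (⟨0, by omega⟩, 0)) := by
    rw [orb, ← permCongrHom_coe, ← map_pow, permCongrHom_coe, permCongr_apply,
      e.1.symm_apply_eq.2 e.2.1.symm]
  have hmem (j : Fin N) (r : Fin 3) :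
      e.1 (j, r) ∈ tripleSet N hN (e.1.permCongr (skewShift v)) j := by
    obtain ⟨t, ht⟩ := exists_pow_apply_eq_of_mem_threeCycles (partialProd_length v ▸ hv) 0
      ((partialProd v j)⁻¹ r)
    refine (mem_tripleSet_iff hN _).2 ⟨t, ?_⟩
    rw [horb, skewShift_pow_block_apply_zero v (by omega), ht]
    simp
  ext ⟨j, r⟩ : 1
  rw [sortedLabeling_apply, nthSmallest_tripleSet hN hc,
    ← orderEmbOfFin_unique (card_tripleSet hN hc j) (hmem j) (e.2.2 j)]

theorem inducedTuple_permCongr (e : SortedLabelings hN) {v : Fin N → Perm (Fin 3)}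
    (hv : (List.ofFn v).reverse.prod ∈ threeCycles) :
    inducedTuple N hN (e.1.permCongr (skewShift v)) v := by
  rw [inducedTuple_iff_permCongr hN (isCycleOn_permCongr_skewShift e hv),
    sortedLabeling_permCongr e hv]

end Conjugation

section Counting

theorem card_isCycle_and_card_support_eq_card {α : Type*} [Fintype α] [DecidableEq α]
    (h : 2 ≤ Fintype.card α) :
    Nat.card {f : Perm α // f.IsCycle ∧ #f.support = Fintype.card α} =
      (Fintype.card α - 1).factorial := by
  classical
  have hiff (f : Perm α) :
      f.IsCycle ∧ #f.support = Fintype.card α ↔ f.cycleType = {Fintype.card α} := by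
    refine ⟨fun ⟨hf, hs⟩ => hs ▸ hf.cycleType, fun hf => ?_⟩
    have hcyc : f.IsCycle := card_cycleType_eq_one.1 (by simp [hf])
    exact ⟨hcyc, Multiset.singleton_inj.1 (hcyc.cycleType.symm.trans hf)⟩
  rw [Nat.card_eq_fintype_card, Fintype.card_subtype, filter_congr fun f _ => hiff f,
    card_of_cycleType_singleton h le_rfl, Nat.choose_self, mul_one]

theorem prod_reverse_ofFn_snoc {G : Type*} [Monoid G] {n : ℕ} (w : Fin n → G) (a : G) :
    (List.ofFn (Fin.snoc w a : Fin (n + 1) → G)).reverse.prod =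
      a * (List.ofFn w).reverse.prod := by
  rw [List.ofFn_succ', List.concat_eq_append]
  simp

theorem card_prod_reverse_ofFn_mem {G : Type*} [Group G] (S : Finset G) {N : ℕ} (hN₀ : 0 < N) :
    Nat.card {v : Fin N → G // (List.ofFn v).reverse.prod ∈ S} = #S * Nat.card G ^ (N - 1) := by
  obtain ⟨n, rfl⟩ : ∃ n, N = n + 1 := ⟨N - 1, by omega⟩
  have e : {v : Fin (n + 1) → G // (List.ofFn v).reverse.prod ∈ S} ≃ S × (Fin n → G) :=
    { toFun v := (⟨_, v.2⟩, Fin.init v.1)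
      invFun p := ⟨Fin.snoc p.2 (p.1 * ((List.ofFn p.2).reverse.prod)⁻¹),
        by rw [prod_reverse_ofFn_snoc, inv_mul_cancel_right]; exact p.1.2⟩
      left_inv v := by
        have hv : (List.ofFn v.1).reverse.prod =
            v.1 (Fin.last n) * (List.ofFn (Fin.init v.1)).reverse.prod := by
          conv_lhs => rw [← Fin.snoc_init_self v.1]
          exact prod_reverse_ofFn_snoc _ _
        ext1
        simp only [hv, mul_inv_cancel_right, Fin.snoc_init_self]
      right_inv p :=
        Prod.ext (Subtype.ext (by simp only [prod_reverse_ofFn_snoc, inv_mul_cancel_right]))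
          (Fin.init_snoc (α := fun _ => G) _ _) }
  rw [Nat.card_congr e, Nat.card_prod, Nat.card_fun, Nat.card_eq_fintype_card (α := S),
    Fintype.card_coe, Nat.card_eq_fintype_card (α := Fin n), Fintype.card_fin, Nat.add_sub_cancel]

end Counting

section Equivalences

variable {N : ℕ} (hN : 0 < 3 * N)

include hN in
theorem isCycle_and_card_support_iff_isCycleOn {c : Perm (Fin (3 * N))} :
    c.IsCycle ∧ #c.support = 3 * N ↔ c.IsCycleOn Set.univ := by
  have : Nontrivial (Fin (3 * N)) := Fin.nontrivial_iff_two_le.2 (by omega)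
  simpa using isCycle_and_card_support_eq_card_iff (f := c)

theorem prod_rankPerm_mem_threeCycles {c : Perm (Fin (3 * N))} (hc : c.IsCycleOn Set.univ) :
    (List.ofFn (rankPerm hN hc)).reverse.prod ∈ threeCycles := by
  have h := (inducedTuple_iff_permCongr hN hc _).1 (inducedTuple_rankPerm hN hc)
  rw [← isCycleOn_skewShift_iff _ (by omega), ← isCycleOn_univ_permCongr (sortedLabeling hN hc),
    h]
  exact hc

noncomputable def toSortedLabelings {c : Perm (Fin (3 * N))} (hc : c.IsCycleOn Set.univ) :
    SortedLabelings hN :=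
  ⟨sortedLabeling hN hc, sortedLabeling_zero hN hc, strictMono_sortedLabeling hN hc⟩

abbrev ThreeCycleTuples (N : ℕ) : Type :=
  {v : Fin N → Perm (Fin 3) // (List.ofFn v).reverse.prod ∈ threeCycles}

noncomputable def fullCyclesEquiv :
    {c : Perm (Fin (3 * N)) // c.IsCycle ∧ #c.support = 3 * N} ≃
      SortedLabelings hN × ThreeCycleTuples N where
  toFun c :=
    have hc := (isCycle_and_card_support_iff_isCycleOn hN).1 c.2
    (toSortedLabelings hN hc, ⟨rankPerm hN hc, prod_rankPerm_mem_threeCycles hN hc⟩)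
  invFun p := ⟨p.1.1.permCongr (skewShift p.2.1),
    (isCycle_and_card_support_iff_isCycleOn hN).2 (isCycleOn_permCongr_skewShift p.1 p.2.2)⟩
  left_inv c :=
    have hc := (isCycle_and_card_support_iff_isCycleOn hN).1 c.2
    Subtype.ext <| (inducedTuple_iff_permCongr hN hc _).1 (inducedTuple_rankPerm hN hc)
  right_inv p := Prod.ext (Subtype.ext (sortedLabeling_permCongr p.1 p.2.2)) <| Subtype.ext
    (eq_rankPerm_of_inducedTuple hN (isCycleOn_permCongr_skewShift p.1 p.2.2)
      (inducedTuple_permCongr p.1 p.2.2)).symm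

noncomputable def fiberEquiv {v : Fin N → Perm (Fin 3)}
    (hv : (List.ofFn v).reverse.prod ∈ threeCycles) :
    {c : Perm (Fin (3 * N)) // c.IsCycle ∧ #c.support = 3 * N ∧ inducedTuple N hN c v} ≃
      SortedLabelings hN where
  toFun c :=
    toSortedLabelings hN ((isCycle_and_card_support_iff_isCycleOn hN).1 ⟨c.2.1, c.2.2.1⟩)
  invFun e :=
    have hc := (isCycle_and_card_support_iff_isCycleOn hN).2 (isCycleOn_permCongr_skewShift e hv)
    ⟨e.1.permCongr (skewShift v), hc.1, hc.2, inducedTuple_permCongr e hv⟩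
  left_inv c := Subtype.ext <| (inducedTuple_iff_permCongr hN
    ((isCycle_and_card_support_iff_isCycleOn hN).1 ⟨c.2.1, c.2.2.1⟩) v).1 c.2.2.2
  right_inv e := Subtype.ext (sortedLabeling_permCongr e hv)

theorem card_threeCycleTuples (hN₀ : 0 < N) :
    Nat.card (ThreeCycleTuples N) = 2 * 6 ^ (N - 1) := by
  rw [card_prod_reverse_ofFn_mem _ hN₀, Nat.card_perm, Nat.card_fin]
  rfl

end Equivalences

end CycleTriples

open CycleTriples in
/-- The fibers of the map `c ↦ (p₁(c), …, p_N(c))`, from `3N`-cycles in `S_{3N}` to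
`N`-tuples in `S₃^N` whose product is a 3-cycle, are equinumerous: every fiber over one
of the `2·6^{N-1}` possible targets has cardinality `(3N-1)!/(2·6^{N-1})` (stated
multiplicatively, as the division is exact). -/
theorem fibers_equinumerous (N : ℕ) (hN : 0 < 3 * N)
    (v : Fin N → Equiv.Perm (Fin 3))
    (hv : ((List.ofFn v).reverse).prod = Equiv.swap 0 1 * Equiv.swap 1 2 ∨
          ((List.ofFn v).reverse).prod = Equiv.swap 1 2 * Equiv.swap 0 1) :
    Nat.card {c : Equiv.Perm (Fin (3 * N)) //
        c.IsCycle ∧ c.support.card = 3 * N ∧ inducedTuple N hN c v} *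
      (2 * 6 ^ (N - 1)) = (3 * N - 1).factorial := by
  have hv' : (List.ofFn v).reverse.prod ∈ threeCycles := by simpa [threeCycles] using hv
  calc _ = Nat.card (SortedLabelings hN) * Nat.card (ThreeCycleTuples N) := by
        rw [Nat.card_congr (fiberEquiv hN hv'), card_threeCycleTuples (by omega)]
    _ = Nat.card {c : Equiv.Perm (Fin (3 * N)) // c.IsCycle ∧ c.support.card = 3 * N} := by
        rw [← Nat.card_prod, Nat.card_congr (fullCyclesEquiv hN)]
    _ = (3 * N - 1).factorial := by
        simpa using card_isCycle_and_card_support_eq_card (α := Fin (3 * N)) (by simp; omega)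
end
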